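/- (Lemma 6) Under Assumption 1, every element of 𝒦̂_{𝒮,ext} is a stabilizing distributed gain: if Z̃ and G̃ are clique-block-diagonal, Q̃ ≻ 0, and there exists ρ ∈ ℝ with Ψ(G̃,Q̃,Z̃) + ρ H̃ᵀMH̃ ≻ 0 where H̃ = blkdiag(G̃,G̃), then G̃ is invertible, K = (EᵀE)⁻¹Eᵀ Z̃ G̃⁻¹ E satisfies K ∈ 𝒮, and there exists a positive definite matrix P₀ with (A+BK)ᵀP₀(A+BK) − P₀ ≺ 0. -/

import Mathlib

open Matrix

/-- Block index set: `Idx dims` indexes the rows/columns of an `n × n` matrix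
partitioned into blocks of sizes `dims 0, …, dims (N-1)`. -/
abbrev Idx {N : ℕ} (dims : Fin N → ℕ) : Type := Σ i : Fin N, Fin (dims i)

/-- The sparsity set `𝒮`: the `(i,j)` block vanishes whenever `i ≠ j` and `(i,j) ∉ ℰ`. -/
def Sparse {N : ℕ} (Gr : SimpleGraph (Fin N)) (dims : Fin N → ℕ)
    (K : Matrix (Idx dims) (Idx dims) ℝ) : Prop :=
  ∀ i j : Fin N, i ≠ j → ¬ Gr.Adj i j →
    ∀ (a : Fin (dims i)) (b : Fin (dims j)), K ⟨i, a⟩ ⟨j, b⟩ = 0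

/-- Block-diagonal (w.r.t. the partition `dims`): off-diagonal blocks vanish. -/
def BlkDiag {N : ℕ} (dims : Fin N → ℕ) (K : Matrix (Idx dims) (Idx dims) ℝ) : Prop :=
  ∀ p r : Idx dims, p.1 ≠ r.1 → K p r = 0

/-- `X ≺ 0`: negative definiteness. -/
def NegDef {m : Type*} [Fintype m] (X : Matrix m m ℝ) : Prop := (-X).PosDef

/-- Row index set of the stacked clique selector matrix `E`. -/
abbrev CIdx {N q : ℕ} (dims : Fin N → ℕ) (C : Fin q → Finset (Fin N)) : Type :=
  Σ k : Fin q, Σ j : {x : Fin N // x ∈ C k}, Fin (dims j.1)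

/-- The stacked selector matrix `E = [E_{C_1}ᵀ, …, E_{C_q}ᵀ]ᵀ`. -/
def Emat {N q : ℕ} (dims : Fin N → ℕ) (C : Fin q → Finset (Fin N)) :
    Matrix (CIdx dims C) (Idx dims) ℝ :=
  fun p i => if (⟨p.2.1.1, p.2.2⟩ : Idx dims) = i then 1 else 0

/-- Clique-block-diagonal matrices `blkdiag(X_1, …, X_q)` with `X_k ∈ ℝ^{n_{C_k} × n_{C_k}}`. -/
def CliqueBlkDiag {N q : ℕ} (dims : Fin N → ℕ) (C : Fin q → Finset (Fin N))
    (X : Matrix (CIdx dims C) (CIdx dims C) ℝ) : Prop :=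
  ∀ p r : CIdx dims C, p.1 ≠ r.1 → X p r = 0

/-- `C_1, …, C_q` are cliques of the graph. -/
def IsCliques {N q : ℕ} (Gr : SimpleGraph (Fin N)) (C : Fin q → Finset (Fin N)) : Prop :=
  ∀ k : Fin q, ∀ i ∈ C k, ∀ j ∈ C k, i ≠ j → Gr.Adj i j

/-- Assumption 1: every node is covered, and two distinct nodes share a clique iff adjacent. -/
def Assumption1 {N q : ℕ} (Gr : SimpleGraph (Fin N)) (C : Fin q → Finset (Fin N)) : Prop :=
  (∀ i : Fin N, ∃ k, i ∈ C k) ∧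
    ∀ i j : Fin N, i ≠ j → ((∃ k, i ∈ C k ∧ j ∈ C k) ↔ Gr.Adj i j)

/-- `N₀ = I − E (EᵀE)⁻¹ Eᵀ`. -/
noncomputable def N0 {N q : ℕ} (dims : Fin N → ℕ) (C : Fin q → Finset (Fin N)) :
    Matrix (CIdx dims C) (CIdx dims C) ℝ :=
  1 - Emat dims C * ((Emat dims C)ᵀ * Emat dims C)⁻¹ * (Emat dims C)ᵀ

/-- `M = blkdiag(N₀, N₀)`. -/
noncomputable def Mmat {N q : ℕ} (dims : Fin N → ℕ) (C : Fin q → Finset (Fin N)) :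
    Matrix (CIdx dims C ⊕ CIdx dims C) (CIdx dims C ⊕ CIdx dims C) ℝ :=
  fromBlocks (N0 dims C) 0 0 (N0 dims C)

/-- Dilation `X̃ = E X (EᵀE)⁻¹ Eᵀ`. -/
noncomputable def tilde {N q : ℕ} (dims : Fin N → ℕ) (C : Fin q → Finset (Fin N))
    (X : Matrix (Idx dims) (Idx dims) ℝ) : Matrix (CIdx dims C) (CIdx dims C) ℝ :=
  Emat dims C * X * ((Emat dims C)ᵀ * Emat dims C)⁻¹ * (Emat dims C)ᵀ

/-- The gain `(EᵀE)⁻¹ Eᵀ Z̃ G̃⁻¹ E`. -/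
noncomputable def gainCl {N q : ℕ} (dims : Fin N → ℕ) (C : Fin q → Finset (Fin N))
    (Zt Gt : Matrix (CIdx dims C) (CIdx dims C) ℝ) : Matrix (Idx dims) (Idx dims) ℝ :=
  ((Emat dims C)ᵀ * Emat dims C)⁻¹ * (Emat dims C)ᵀ * Zt * Gt⁻¹ * Emat dims C

/-- `Ψ(G̃, Q̃, Z̃) = [[G̃+G̃ᵀ−Q̃, (ÃG̃+B̃Z̃)ᵀ], [ÃG̃+B̃Z̃, Q̃]]`. -/
noncomputable def Psi {N q : ℕ} (dims : Fin N → ℕ) (C : Fin q → Finset (Fin N))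
    (A B : Matrix (Idx dims) (Idx dims) ℝ)
    (Gt Qt Zt : Matrix (CIdx dims C) (CIdx dims C) ℝ) :
    Matrix (CIdx dims C ⊕ CIdx dims C) (CIdx dims C ⊕ CIdx dims C) ℝ :=
  fromBlocks (Gt + Gtᵀ - Qt) (tilde dims C A * Gt + tilde dims C B * Zt)ᵀ
    (tilde dims C A * Gt + tilde dims C B * Zt) Qt

/-!
Positive definiteness of the extended LMI forces `G̃` to be invertible: on `ker G̃` the quadratic
forms of its two diagonal blocks reduce to `-Q̃` and `Q̃`. Conjugating the LMI by `blkdiag(S, S)`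
with `S = G̃⁻¹ E` removes the `ρ`-term, because `N₀ E = 0`, and since
`(Ã G̃ + B̃ Z̃) S = E (A + B K)` it turns the LMI into the classical extended stability LMI
`[[F + Fᵀ - Q, (F A_K)ᵀ], [F A_K, Q]] ≻ 0` for `A_K = A + B K`, `F = Sᵀ E`, `Q = Sᵀ Q̃ S`. Its Schur complement, together with
`Fᵀ Q⁻¹ F = F + Fᵀ - Q + (F - Q)ᵀ Q⁻¹ (F - Q)`, shows that `P₀ = Fᵀ Q⁻¹ F` is a Lyapunov matrix.

Sparsity: clique-block-diagonal matrices form a finite-dimensional subalgebra, which is therefore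
closed under inversion and contains `Z̃ G̃⁻¹`; for such `W`, `Eᵀ W E` only couples nodes that share
a clique, and `(EᵀE)⁻¹` is diagonal.
-/

namespace Matrix

variable {m n : Type*}

lemma mulVec_injective_of_mul_eq_one [Fintype m] [Fintype n] [DecidableEq n]
    {L : Matrix n m ℝ} {S : Matrix m n ℝ} (h : L * S = 1) : Function.Injective S.mulVec :=
  fun x y hxy => by simpa [mulVec_mulVec, h] using congrArg (L *ᵥ ·) hxy

lemma fromBlocks_diag_mulVec_injective [Fintype n] {S : Matrix m n ℝ}
    (hS : Function.Injective S.mulVec) :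
    Function.Injective (fromBlocks S 0 0 S : Matrix (m ⊕ m) (n ⊕ n) ℝ).mulVec := by
  intro x y hxy
  rw [← Sum.elim_comp_inl_inr x, ← Sum.elim_comp_inl_inr y] at hxy ⊢
  simp only [fromBlocks_mulVec, zero_mulVec, add_zero, zero_add, Sum.elim_comp_inl,
    Sum.elim_comp_inr, Sum.elim_eq_iff] at hxy
  rw [hS hxy.1, hS hxy.2]

lemma transpose_fromBlocks_diag_mul_mul [Fintype m] {S : Matrix m n ℝ} (P Q R T : Matrix m m ℝ) :
    (fromBlocks S 0 0 S)ᵀ * fromBlocks P Q R T * fromBlocks S 0 0 S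
      = fromBlocks (Sᵀ * P * S) (Sᵀ * Q * S) (Sᵀ * R * S) (Sᵀ * T * S) := by
  simp [fromBlocks_transpose, fromBlocks_multiply]

namespace PosDef

lemma of_fromBlocks₁₁ {P : Matrix m m ℝ} {Q : Matrix m n ℝ} {R : Matrix n m ℝ}
    {T : Matrix n n ℝ} (h : (fromBlocks P Q R T).PosDef) : P.PosDef :=
  h.submatrix Sum.inl_injective

lemma of_fromBlocks₂₂ {P : Matrix m m ℝ} {Q : Matrix m n ℝ} {R : Matrix n m ℝ}
    {T : Matrix n n ℝ} (h : (fromBlocks P Q R T).PosDef) : T.PosDef :=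
  h.submatrix Sum.inr_injective

lemma schurComplement₂₂ [Fintype m] [Fintype n] [DecidableEq m] [DecidableEq n]
    {P : Matrix m m ℝ} {B : Matrix n m ℝ} {T : Matrix n n ℝ}
    (h : (fromBlocks P Bᵀ B T).PosDef) : (P - Bᵀ * T⁻¹ * B).PosDef := by
  have hT := h.of_fromBlocks₂₂
  have hTinv : T⁻¹ * T = 1 := nonsing_inv_mul T ((isUnit_iff_isUnit_det T).mp hT.isUnit)
  have hTinv_symm : (T⁻¹)ᵀ = T⁻¹ := by
    rw [transpose_nonsing_inv, ← conjTranspose_eq_transpose_of_trivial, hT.isHermitian.eq]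
  have hinj : Function.Injective (fromRows (1 : Matrix m m ℝ) (-(T⁻¹ * B))).mulVec :=
    mulVec_injective_of_mul_eq_one (L := fromCols 1 0) (by simp [fromCols_mul_fromRows])
  convert h.conjTranspose_mul_mul_same hinj using 1
  rw [conjTranspose_eq_transpose_of_trivial, transpose_fromRows, fromCols_mul_fromBlocks,
    fromCols_mul_fromRows]
  simp only [transpose_one, Matrix.one_mul, Matrix.mul_one, transpose_neg, transpose_mul,
    hTinv_symm, Matrix.mul_neg, Matrix.neg_mul, Matrix.mul_assoc, hTinv, add_neg_cancel,
    Matrix.zero_mul, neg_zero, add_zero, sub_eq_add_neg]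

end PosDef

lemma isUnit_of_posDef_fromBlocks [Fintype n] [DecidableEq n] {X Q R B C : Matrix n n ℝ}
    (h : (fromBlocks (X + Xᵀ - Q + Xᵀ * R * X) B C (Q + Xᵀ * R * X)).PosDef) : IsUnit X := by
  rw [isUnit_iff_isUnit_det, isUnit_iff_ne_zero]
  intro hdet
  obtain ⟨v, hv0, hv⟩ := exists_mulVec_eq_zero_iff.mpr hdet
  have q₁ := h.of_fromBlocks₁₁.dotProduct_mulVec_pos hv0
  have q₂ := h.of_fromBlocks₂₂.dotProduct_mulVec_pos hv0
  simp only [add_mulVec, sub_mulVec, ← mulVec_mulVec, hv, mulVec_zero, dotProduct_add,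
    dotProduct_sub, dotProduct_zero, star_trivial, dotProduct_mulVec _ Xᵀ, vecMul_transpose,
    zero_dotProduct] at q₁ q₂
  linarith

lemma exists_posDef_lyapunov_of_posDef_fromBlocks [Fintype n] [DecidableEq n]
    {A G Q : Matrix n n ℝ} (h : (fromBlocks (G + Gᵀ - Q) (G * A)ᵀ (G * A) Q).PosDef) :
    ∃ P : Matrix n n ℝ, P.PosDef ∧ NegDef (Aᵀ * P * A - P) := by
  have hQ := h.of_fromBlocks₂₂
  have hQinv : Q⁻¹ * Q = 1 := nonsing_inv_mul Q ((isUnit_iff_isUnit_det Q).mp hQ.isUnit)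
  have hQinv' : Q * Q⁻¹ = 1 := mul_nonsing_inv Q ((isUnit_iff_isUnit_det Q).mp hQ.isUnit)
  have hQ_symm : Qᵀ = Q := by rw [← conjTranspose_eq_transpose_of_trivial, hQ.isHermitian.eq]
  have hgap : ((G - Q)ᵀ * Q⁻¹ * (G - Q)).PosSemidef := by
    simpa [conjTranspose_eq_transpose_of_trivial] using
      hQ.inv.posSemidef.conjTranspose_mul_mul_same (G - Q)
  have hP : Gᵀ * Q⁻¹ * G = G + Gᵀ - Q + (G - Q)ᵀ * Q⁻¹ * (G - Q) := by
    simp only [transpose_sub, hQ_symm, sub_mul, mul_sub, Matrix.mul_assoc, hQinv, hQinv',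
      Matrix.one_mul, Matrix.mul_one]
    abel
  refine ⟨Gᵀ * Q⁻¹ * G, hP ▸ h.of_fromBlocks₁₁.add_posSemidef hgap, ?_⟩
  have hdecrease : Gᵀ * Q⁻¹ * G - Aᵀ * (Gᵀ * Q⁻¹ * G) * A
      = G + Gᵀ - Q - (G * A)ᵀ * Q⁻¹ * (G * A) + (G - Q)ᵀ * Q⁻¹ * (G - Q) := by
    rw [transpose_mul, sub_add_eq_add_sub, ← hP]
    simp only [Matrix.mul_assoc]
  rw [NegDef, neg_sub, hdecrease]
  exact h.schurComplement₂₂.add_posSemidef hgap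

end Matrix

lemma Subalgebra.nonsing_inv_mem {K n : Type*} [Field K] [Fintype n] [DecidableEq n]
    (S : Subalgebra K (Matrix n n K)) {X : Matrix n n K} (hX : X ∈ S) : X⁻¹ ∈ S := by
  by_cases hu : IsUnit X
  · have : IsArtinianRing S := .of_finite K S
    have hreg : IsRegular (⟨X, hX⟩ : S) :=
      ⟨fun a b h => Subtype.val_injective (hu.isRegular.left (congrArg Subtype.val h)),
        fun a b h => Subtype.val_injective (hu.isRegular.right (congrArg Subtype.val h))⟩
    obtain ⟨u, hu'⟩ := IsArtinianRing.isUnit_iff_isRegular.mpr hreg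
    have hinv : X * ((u⁻¹ : Sˣ) : S) = 1 := by
      simpa only [MulMemClass.coe_mul, OneMemClass.coe_one, hu'] using
        congrArg Subtype.val u.mul_inv
    rw [inv_eq_right_inv hinv]
    exact ((u⁻¹ : Sˣ) : S).2
  · rw [nonsing_inv_apply_not_isUnit X (mt (isUnit_iff_isUnit_det X).mpr hu)]
    exact S.zero_mem

section CliqueSelector

variable {N q : ℕ} {dims : Fin N → ℕ} {C : Fin q → Finset (Fin N)}

def rowNode (p : CIdx dims C) : Idx dims := ⟨p.2.1.1, p.2.2⟩

lemma Emat_apply (p : CIdx dims C) (x : Idx dims) :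
    Emat dims C p x = if rowNode p = x then 1 else 0 := rfl

lemma Emat_mulVec_apply (v : Idx dims → ℝ) (p : CIdx dims C) :
    (Emat dims C *ᵥ v) p = v (rowNode p) := by
  simp [mulVec, dotProduct, Emat_apply]

lemma Emat_mulVec_injective (hcov : ∀ i : Fin N, ∃ k, i ∈ C k) :
    Function.Injective (Emat dims C).mulVec := by
  intro v w h
  funext x
  obtain ⟨k, hk⟩ := hcov x.1
  simpa [Emat_mulVec_apply, rowNode] using congrFun h ⟨k, ⟨x.1, hk⟩, x.2⟩

lemma isUnit_Emat_transpose_mul_Emat (hcov : ∀ i : Fin N, ∃ k, i ∈ C k) :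
    IsUnit ((Emat dims C)ᵀ * Emat dims C) := by
  simpa [conjTranspose_eq_transpose_of_trivial] using
    (PosDef.conjTranspose_mul_self _ (Emat_mulVec_injective hcov)).isUnit

lemma isDiag_Emat_transpose_mul_Emat : ((Emat dims C)ᵀ * Emat dims C).IsDiag := by
  intro x y hxy
  simp only [mul_apply, transpose_apply, Emat_apply]
  refine Finset.sum_eq_zero fun p _ => ?_
  split_ifs <;> simp_all

lemma Emat_transpose_mul_mul_Emat_apply_eq_zero {W : Matrix (CIdx dims C) (CIdx dims C) ℝ}
    (hW : CliqueBlkDiag dims C W) {x y : Idx dims} (hxy : ¬∃ k, x.1 ∈ C k ∧ y.1 ∈ C k) :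
    ((Emat dims C)ᵀ * W * Emat dims C) x y = 0 := by
  simp only [mul_apply, transpose_apply, Emat_apply, ite_mul, one_mul, zero_mul, mul_ite,
    mul_one, mul_zero]
  refine Finset.sum_eq_zero fun r _ => ?_
  split_ifs with hr
  · refine Finset.sum_eq_zero fun p _ => ?_
    split_ifs with hp
    · refine hW p r fun hpr => hxy ⟨r.1, ?_, ?_⟩
      · rw [← hp, ← hpr]
        exact p.2.1.2
      · rw [← hr]
        exact r.2.1.2
    · rfl
  · rfl

end CliqueSelector

section CliqueBlockDiagonal

variable {N q : ℕ} (dims : Fin N → ℕ) (C : Fin q → Finset (Fin N))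

def cliqueBlkDiagSubalgebra : Subalgebra ℝ (Matrix (CIdx dims C) (CIdx dims C) ℝ) where
  carrier := {X | CliqueBlkDiag dims C X}
  mul_mem' {X Y} hX hY p r hpr := by
    refine (mul_apply (M := X)).trans (Finset.sum_eq_zero fun s _ => ?_)
    by_cases hps : p.1 = s.1
    · rw [hY s r (hps ▸ hpr), mul_zero]
    · rw [hX p s hps, zero_mul]
  add_mem' {X Y} hX hY p r hpr := by rw [Matrix.add_apply, hX p r hpr, hY p r hpr, add_zero]
  algebraMap_mem' c p r hpr := by
    rw [algebraMap_eq_diagonal]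
    exact diagonal_apply_ne _ fun h => hpr (congrArg Sigma.fst h)

variable {dims C}

lemma sparse_gainCl {Gr : SimpleGraph (Fin N)}
    (hadj : ∀ i j : Fin N, i ≠ j → (∃ k, i ∈ C k ∧ j ∈ C k) → Gr.Adj i j)
    {Zt Gt : Matrix (CIdx dims C) (CIdx dims C) ℝ}
    (hZt : CliqueBlkDiag dims C Zt) (hGt : CliqueBlkDiag dims C Gt) :
    Sparse Gr dims (gainCl dims C Zt Gt) := by
  have hW : CliqueBlkDiag dims C (Zt * Gt⁻¹) :=
    (cliqueBlkDiagSubalgebra dims C).mul_mem hZt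
      ((cliqueBlkDiagSubalgebra dims C).nonsing_inv_mem hGt)
  intro i j hij hnadj a b
  have hgain : gainCl dims C Zt Gt
      = ((Emat dims C)ᵀ * Emat dims C)⁻¹ * ((Emat dims C)ᵀ * (Zt * Gt⁻¹) * Emat dims C) := by
    simp only [gainCl, Matrix.mul_assoc]
  rw [hgain, ← isDiag_Emat_transpose_mul_Emat.diagonal_diag, inv_diagonal, diagonal_mul,
    Emat_transpose_mul_mul_Emat_apply_eq_zero hW fun hk => hnadj (hadj i j hij hk), mul_zero]

end CliqueBlockDiagonal

lemma Psi_add_smul_eq_fromBlocks {N q : ℕ} {dims : Fin N → ℕ} {C : Fin q → Finset (Fin N)}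
    (A B : Matrix (Idx dims) (Idx dims) ℝ) (Gt Qt Zt : Matrix (CIdx dims C) (CIdx dims C) ℝ)
    (ρ : ℝ) :
    Psi dims C A B Gt Qt Zt + ρ • ((fromBlocks Gt 0 0 Gt)ᵀ * Mmat dims C * fromBlocks Gt 0 0 Gt)
      = fromBlocks (Gt + Gtᵀ - Qt + Gtᵀ * (ρ • N0 dims C) * Gt)
          (tilde dims C A * Gt + tilde dims C B * Zt)ᵀ
          (tilde dims C A * Gt + tilde dims C B * Zt) (Qt + Gtᵀ * (ρ • N0 dims C) * Gt) := by
  rw [Psi, Mmat, transpose_fromBlocks_diag_mul_mul, fromBlocks_smul, fromBlocks_add]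
  simp only [Matrix.mul_smul, Matrix.smul_mul, Matrix.mul_zero, Matrix.zero_mul, smul_zero,
    add_zero]

section Dilation

variable {N q : ℕ} {dims : Fin N → ℕ} {C : Fin q → Finset (Fin N)}
  (hE : IsUnit ((Emat dims C)ᵀ * Emat dims C))
include hE

lemma N0_mul_Emat : N0 dims C * Emat dims C = 0 := by
  rw [N0, Matrix.sub_mul, Matrix.one_mul, Matrix.mul_assoc, Matrix.mul_assoc,
    nonsing_inv_mul _ ((isUnit_iff_isUnit_det _).mp hE), Matrix.mul_one, sub_self]

lemma tilde_mul_Emat (X : Matrix (Idx dims) (Idx dims) ℝ) :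
    tilde dims C X * Emat dims C = Emat dims C * X := by
  rw [tilde, Matrix.mul_assoc, Matrix.mul_assoc,
    nonsing_inv_mul _ ((isUnit_iff_isUnit_det _).mp hE), Matrix.mul_one]

variable (A B : Matrix (Idx dims) (Idx dims) ℝ) {Gt : Matrix (CIdx dims C) (CIdx dims C) ℝ}
  {S : Matrix (CIdx dims C) (Idx dims) ℝ} (hG : IsUnit Gt) (hGS : Gt * S = Emat dims C)
include hG hGS

lemma tilde_mul_add_tilde_mul_mul (Zt : Matrix (CIdx dims C) (CIdx dims C) ℝ) :
    (tilde dims C A * Gt + tilde dims C B * Zt) * S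
      = Emat dims C * (A + B * gainCl dims C Zt Gt) := by
  have hS : S = Gt⁻¹ * Emat dims C := by
    rw [← hGS, ← Matrix.mul_assoc, nonsing_inv_mul _ ((isUnit_iff_isUnit_det _).mp hG),
      Matrix.one_mul]
  rw [Matrix.add_mul, Matrix.mul_assoc, hGS, tilde_mul_Emat hE, Matrix.mul_add, hS]
  simp only [tilde, gainCl, Matrix.mul_assoc]

lemma transpose_mul_Psi_add_smul_mul (Zt Qt : Matrix (CIdx dims C) (CIdx dims C) ℝ) (ρ : ℝ) :
    (fromBlocks S 0 0 S)ᵀ * (Psi dims C A B Gt Qt Zt +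
        ρ • ((fromBlocks Gt 0 0 Gt)ᵀ * Mmat dims C * (fromBlocks Gt 0 0 Gt))) *
      fromBlocks S 0 0 S
      = fromBlocks (Sᵀ * Emat dims C + (Sᵀ * Emat dims C)ᵀ - Sᵀ * Qt * S)
          (Sᵀ * Emat dims C * (A + B * gainCl dims C Zt Gt))ᵀ
          (Sᵀ * Emat dims C * (A + B * gainCl dims C Zt Gt)) (Sᵀ * Qt * S) := by
  have hM : (fromBlocks Gt 0 0 Gt * fromBlocks S 0 0 S)ᵀ * Mmat dims C *
      (fromBlocks Gt 0 0 Gt * fromBlocks S 0 0 S) = 0 := by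
    simp only [fromBlocks_multiply, Matrix.mul_zero, Matrix.zero_mul, add_zero, zero_add, hGS]
    rw [Mmat, Matrix.mul_assoc, fromBlocks_multiply]
    simp [N0_mul_Emat hE]
  have hGS' : Sᵀ * Gtᵀ * S = (Sᵀ * Emat dims C)ᵀ := by
    rw [← hGS, transpose_mul, transpose_transpose, transpose_mul, Matrix.mul_assoc]
  have hL : Sᵀ * (tilde dims C A * Gt + tilde dims C B * Zt) * S
      = Sᵀ * Emat dims C * (A + B * gainCl dims C Zt Gt) := by
    rw [Matrix.mul_assoc, tilde_mul_add_tilde_mul_mul hE A B hG hGS, Matrix.mul_assoc]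
  rw [Matrix.mul_add, Matrix.add_mul, Matrix.mul_smul, Matrix.smul_mul,
    show (fromBlocks S 0 0 S)ᵀ * ((fromBlocks Gt 0 0 Gt)ᵀ * Mmat dims C * fromBlocks Gt 0 0 Gt) *
      fromBlocks S 0 0 S = (fromBlocks Gt 0 0 Gt * fromBlocks S 0 0 S)ᵀ * Mmat dims C *
      (fromBlocks Gt 0 0 Gt * fromBlocks S 0 0 S) by simp only [transpose_mul, Matrix.mul_assoc],
    hM, smul_zero, add_zero, Psi, transpose_fromBlocks_diag_mul_mul]
  refine fromBlocks_inj.mpr ⟨?_, ?_, hL, rfl⟩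
  · rw [Matrix.mul_sub, Matrix.sub_mul, Matrix.mul_add, Matrix.add_mul, hGS',
      Matrix.mul_assoc Sᵀ Gt, hGS]
  · rw [← hL]
    simp only [transpose_mul, transpose_transpose, Matrix.mul_assoc]

end Dilation

theorem stmt12_general {N q : ℕ} (Gr : SimpleGraph (Fin N)) (dims : Fin N → ℕ)
    (C : Fin q → Finset (Fin N)) (hass : Assumption1 Gr C)
    (A B : Matrix (Idx dims) (Idx dims) ℝ)
    (Zt Gt Qt : Matrix (CIdx dims C) (CIdx dims C) ℝ)
    (hZt : CliqueBlkDiag dims C Zt) (hGt : CliqueBlkDiag dims C Gt)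
    (ρ : ℝ)
    (h : (Psi dims C A B Gt Qt Zt +
        ρ • ((fromBlocks Gt 0 0 Gt)ᵀ * Mmat dims C * (fromBlocks Gt 0 0 Gt))).PosDef) :
    IsUnit Gt ∧ Sparse Gr dims (gainCl dims C Zt Gt) ∧
    ∃ P0 : Matrix (Idx dims) (Idx dims) ℝ, P0.PosDef ∧
      NegDef ((A + B * gainCl dims C Zt Gt)ᵀ * P0 * (A + B * gainCl dims C Zt Gt) - P0) := by
  obtain ⟨hcov, hadj⟩ := hass
  have hG : IsUnit Gt := isUnit_of_posDef_fromBlocks (Psi_add_smul_eq_fromBlocks A B Gt Qt Zt ρ ▸ h)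
  refine ⟨hG, sparse_gainCl (fun i j hij => (hadj i j hij).1) hZt hGt, ?_⟩
  set S := Gt⁻¹ * Emat dims C
  have hGS : Gt * S = Emat dims C := by
    rw [← Matrix.mul_assoc, mul_nonsing_inv _ ((isUnit_iff_isUnit_det _).mp hG), Matrix.one_mul]
  have hS : Function.Injective S.mulVec := fun v w hvw =>
    Emat_mulVec_injective hcov (by simpa only [mulVec_mulVec, hGS] using congrArg (Gt *ᵥ ·) hvw)
  have hcongr := h.conjTranspose_mul_mul_same (fromBlocks_diag_mulVec_injective hS)
  rw [conjTranspose_eq_transpose_of_trivial,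
    transpose_mul_Psi_add_smul_mul (isUnit_Emat_transpose_mul_Emat hcov) A B hG hGS] at hcongr
  exact exists_posDef_lyapunov_of_posDef_fromBlocks hcongr

/-- Lemma 6: every element of `𝒦̂_{𝒮,ext}` is a stabilizing distributed gain. -/
theorem stmt12 {N q : ℕ} (Gr : SimpleGraph (Fin N)) (dims : Fin N → ℕ)
    (C : Fin q → Finset (Fin N)) (hclq : IsCliques Gr C) (hass : Assumption1 Gr C)
    (A B : Matrix (Idx dims) (Idx dims) ℝ)
    (Zt Gt Qt : Matrix (CIdx dims C) (CIdx dims C) ℝ)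
    (hZt : CliqueBlkDiag dims C Zt) (hGt : CliqueBlkDiag dims C Gt) (hQpd : Qt.PosDef)
    (ρ : ℝ)
    (h : (Psi dims C A B Gt Qt Zt +
        ρ • ((fromBlocks Gt 0 0 Gt)ᵀ * Mmat dims C * (fromBlocks Gt 0 0 Gt))).PosDef) :
    IsUnit Gt ∧ Sparse Gr dims (gainCl dims C Zt Gt) ∧
    ∃ P0 : Matrix (Idx dims) (Idx dims) ℝ, P0.PosDef ∧
      NegDef ((A + B * gainCl dims C Zt Gt)ᵀ * P0 * (A + B * gainCl dims C Zt Gt) - P0) :=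
  stmt12_general Gr dims C hass A B Zt Gt Qt hZt hGt ρ h
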